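/- Define artin(λ) as the least cardinal κ such that no algebra of cardinality κ with signature of size at most λ is Artinian (if such κ exists). Then for any infinite cardinals λ₁ < λ₂ < artin(λ₁), one has artin(λ₂) = artin(λ₁). -/

import Mathlib

/-!
Monotonicity of `ArtinAt` in the number of operations gives `κ₀ ≤ artin(λ₂)`. Conversely, let `A`
on `M` be Artinian with `#M = κ₀` and at most `λ₂` operations. As `λ₂ < κ₀`, some Artinian `B` on
`N` has `#N = λ₂` and at most `λ₁` operations. A subalgebra of `A` generated by a finite tuple `z`
has at most `λ₂` elements, so there are maps `c z : M → N`, `e z : N → M` with `e z ∘ c z = id` on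
it. The algebra on `M ⊕ N` with the operations of `B` and, for each length of `z`, the operations
`(z, w) ↦ c z w` and `(z, b) ↦ e z b` has at most `λ₁` operations and `κ₀` elements, so it has a
bad sequence: no term lies in the subalgebra generated by the later ones. A subsequence lies in
`N`, and is then bad for `B`, or in `M`. In the latter case, since `A` is Artinian, almost every
term `x` is generated in `A` by a tuple `z` of later terms, and the codes `c z x` form a bad
sequence of `B`, because decoding recovers `x`.
-/

universe u

structure Alg (ι : Type u) (M : Type u) where
  arity : ι → ℕ
  op : (i : ι) → (Fin (arity i) → M) → M

namespace Alg

variable {ι M : Type u}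

/-- A set is closed under all operations of the algebra. -/
def Closed (A : Alg ι M) (S : Set M) : Prop :=
  ∀ (i : ι) (x : Fin (A.arity i) → M), (∀ k, x k ∈ S) → A.op i x ∈ S

/-- Membership in the subalgebra generated by `X`. -/
inductive cl (A : Alg ι M) (X : Set M) : M → Prop
  | base {m : M} (h : m ∈ X) : cl A X m
  | op (i : ι) (x : Fin (A.arity i) → M) (h : ∀ k, cl A X (x k)) : cl A X (A.op i x)

/-- A subset is free if no element lies in the subalgebra generated by the others. -/
def Free (A : Alg ι M) (X : Set M) : Prop :=
  ∀ x ∈ X, ¬ A.cl (X \ {x}) x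

/-- An algebra is Artinian if there is no infinite strictly descending chain of
(nonempty closed) subalgebras. -/
def Artinian (A : Alg ι M) : Prop :=
  ¬ ∃ S : ℕ → Set M, (∀ n, (S n).Nonempty ∧ A.Closed (S n)) ∧ ∀ n, S (n + 1) ⊂ S n

end Alg

open Cardinal

/-- `ArtinAt lam κ` : every algebra of cardinality κ with at most lam operations is
non-Artinian. -/
def ArtinAt (lam κ : Cardinal.{u}) : Prop :=
  ∀ (ι M : Type u) (A : Alg ι M), #ι ≤ lam → #M = κ → ¬ A.Artinian

/-- `FrAt lam κ` : every algebra of cardinality κ with at most lam operations has an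
infinite free subset. -/
def FrAt (lam κ : Cardinal.{u}) : Prop :=
  ∀ (ι M : Type u) (A : Alg ι M), #ι ≤ lam → #M = κ →
    ∃ X : Set M, X.Infinite ∧ A.Free X

open Set

theorem ArtinAt.anti {lam lam' κ : Cardinal.{u}} (hκ : ArtinAt lam' κ) (h : lam ≤ lam') :
    ArtinAt lam κ :=
  fun ι M A hι hM => hκ ι M A (hι.trans h) hM

theorem exists_leftInvOn_of_mk_le {M N : Type u} [Nonempty M] [Nonempty N] {S : Set M}
    (h : #S ≤ #N) : ∃ (e : N → M) (c : M → N), LeftInvOn e c S := by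
  obtain ⟨f⟩ := h
  refine ⟨Function.extend f Subtype.val fun _ => Classical.arbitrary M,
    Function.extend Subtype.val f fun _ => Classical.arbitrary N, fun m hm => ?_⟩
  exact (congrArg _ (Subtype.val_injective.extend_apply f _ ⟨m, hm⟩)).trans
    (f.injective.extend_apply _ _ _)

namespace Alg

variable {ι M : Type u} {A : Alg ι M}

theorem cl.mono {X Y : Set M} (h : X ⊆ Y) {m : M} (hm : A.cl X m) : A.cl Y m := by
  induction hm with
  | base hx => exact .base (h hx)
  | op i x _ ih => exact .op i x ih

theorem cl.mem_of_closed {X S : Set M} (hS : A.Closed S) (hXS : X ⊆ S) {m : M}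
    (hm : A.cl X m) : m ∈ S := by
  induction hm with
  | base hx => exact hXS hx
  | op i x _ ih => exact hS i x ih

theorem cl.trans {X Y : Set M} (h : ∀ y ∈ Y, A.cl X y) {m : M} (hm : A.cl Y m) : A.cl X m := by
  induction hm with
  | base hy => exact h _ hy
  | op i x _ ih => exact .op i x ih

theorem closed_setOf_cl (X : Set M) : A.Closed {m | A.cl X m} := fun i x hx => .op i x hx

theorem cl.exists_fin_tuple {X : Set M} {m : M} (hm : A.cl X m) :
    ∃ (r : ℕ) (z : Fin r → M), range z ⊆ X ∧ A.cl (range z) m := by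
  suffices ∃ Y ⊆ X, Y.Finite ∧ A.cl Y m by
    obtain ⟨Y, hYX, hY, hmY⟩ := this
    obtain ⟨r, z, rfl⟩ := hY.fin_embedding
    exact ⟨r, z, hYX, hmY⟩
  induction hm with
  | base hx => exact ⟨{_}, singleton_subset_iff.2 hx, finite_singleton _, .base rfl⟩
  | op i x _ ih =>
    choose Y hYX hY hxY using ih
    exact ⟨⋃ k, Y k, iUnion_subset hYX, finite_iUnion hY,
      .op i x fun k => (hxY k).mono (subset_iUnion Y k)⟩

/-- Terms over `X`: a leaf is a variable from `X`, a node labelled `i` has `A.arity i` children. -/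
abbrev Term (A : Alg ι M) (X : Set M) : Type u :=
  WType fun a : X ⊕ ι => ULift.{u} (Fin (Sum.elim (fun _ => 0) A.arity a))

def Term.eval {X : Set M} : A.Term X → M
  | ⟨.inl x, _⟩ => x
  | ⟨.inr i, f⟩ => A.op i fun k => Term.eval (f ⟨k⟩)

theorem Term.cl_eval {X : Set M} (t : A.Term X) : A.cl X t.eval := by
  induction t with
  | mk a f ih =>
    cases a with
    | inl x => exact .base x.2
    | inr i => exact .op i _ fun k => ih ⟨k⟩

theorem cl.exists_eval_eq {X : Set M} {m : M} (hm : A.cl X m) : ∃ t : A.Term X, t.eval = m := by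
  induction hm with
  | base hx => exact ⟨⟨.inl ⟨_, hx⟩, fun k => k.down.elim0⟩, rfl⟩
  | op i x _ ih =>
    choose t ht using ih
    exact ⟨⟨.inr i, fun k => t k.down⟩, by simp only [Term.eval, ht]⟩

theorem mk_setOf_cl_le {lam : Cardinal.{u}} (hlam : ℵ₀ ≤ lam) (hι : #ι ≤ lam) {X : Set M}
    (hX : #X ≤ lam) : #{m | A.cl X m} ≤ lam :=
  calc #{m | A.cl X m} ≤ #(A.Term X) :=
        mk_le_of_surjective (f := fun t => ⟨t.eval, t.cl_eval⟩) fun ⟨_, hm⟩ =>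
          let ⟨t, ht⟩ := hm.exists_eval_eq; ⟨t, Subtype.ext ht⟩
    _ ≤ max #(X ⊕ ι) ℵ₀ := WType.cardinalMk_le_max_aleph0_of_finite
    _ ≤ lam := max_le (by rw [mk_sum, lift_id, lift_id]; exact add_le_of_le hlam hX hι) hlam

def IsBadSeq (A : Alg ι M) (x : ℕ → M) : Prop :=
  ∀ n, ¬ A.cl (x '' Ioi n) (x n)

theorem isBadSeq_comp_of_strictMono {x : ℕ → M} {f : ℕ → ℕ} (hf : StrictMono f)
    (h : ∀ k, ¬ A.cl (x '' Ioi (f k)) (x (f k))) : A.IsBadSeq (x ∘ f) := by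
  intro k hk
  refine h k (hk.mono ?_)
  rintro _ ⟨j, hj, rfl⟩
  exact ⟨f j, hf hj, rfl⟩

theorem IsBadSeq.comp {x : ℕ → M} (hx : A.IsBadSeq x) {f : ℕ → ℕ} (hf : StrictMono f) :
    A.IsBadSeq (x ∘ f) :=
  isBadSeq_comp_of_strictMono hf fun k => hx (f k)

theorem IsBadSeq.not_artinian {x : ℕ → M} (hx : A.IsBadSeq x) : ¬ A.Artinian := by
  refine fun hA => hA ⟨fun n => {m | A.cl (x '' Ici n) m},
    fun n => ⟨⟨x n, .base (mem_image_of_mem x self_mem_Ici)⟩, closed_setOf_cl _⟩, fun n => ?_⟩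
  refine (ssubset_iff_of_subset ?_).2
    ⟨x n, .base (mem_image_of_mem x self_mem_Ici), fun hn => hx n ?_⟩
  · exact fun m hm => hm.mono (image_mono (Ici_subset_Ici.2 n.le_succ))
  · exact hn.mono (image_mono fun _ hj => hj)

theorem exists_isBadSeq_of_not_artinian (h : ¬ A.Artinian) : ∃ x, A.IsBadSeq x := by
  obtain ⟨S, hS, hSS⟩ := not_not.1 h
  choose x hxS hxS' using fun n => exists_of_ssubset (hSS n)
  refine ⟨x, fun n hn => hxS' n (hn.mem_of_closed (hS (n + 1)).2 ?_)⟩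
  rintro _ ⟨m, hm, rfl⟩
  exact antitone_nat_of_succ_le (fun n => (hSS n).subset) hm (hxS m)

theorem Artinian.finite_setOf_not_cl (hA : A.Artinian) (x : ℕ → M) :
    {n | ¬ A.cl (x '' Ioi n) (x n)}.Finite := by
  by_contra hinf
  exact (isBadSeq_comp_of_strictMono (Nat.nth_strictMono hinf)
    (Nat.nth_mem_of_infinite hinf)).not_artinian hA

section Coding

variable {ι' N : Type u} (B : Alg ι' N) (e : ∀ r, (Fin r → M) → N → M)
  (c : ∀ r, (Fin r → M) → M → N) (m₀ : M) (b₀ : N)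

/-- The operations of `B` on `N`, and for each `r` the operations `(z, w) ↦ c r z w` and
`(z, b) ↦ e r z b` with `z : Fin r → M`; an argument of the wrong sort is read as `m₀` or `b₀`. -/
def coding : Alg (ι' ⊕ ULift.{u} (ℕ ⊕ ℕ)) (M ⊕ N) where
  arity
    | .inl t => B.arity t
    | .inr ⟨.inl r⟩ => r + 1
    | .inr ⟨.inr r⟩ => r + 1
  op
    | .inl t, v => .inr (B.op t fun k => (v k).elim (fun _ => b₀) id)
    | .inr ⟨.inl r⟩, v => .inr (c r (fun k => (v k.castSucc).elim id fun _ => m₀)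
        ((v (Fin.last r)).elim id fun _ => m₀))
    | .inr ⟨.inr r⟩, v => .inl (e r (fun k => (v k.castSucc).elim id fun _ => m₀)
        ((v (Fin.last r)).elim (fun _ => b₀) id))

variable {B e c m₀ b₀}

theorem cl_coding_inr {Y : Set N} {w : N} (hw : B.cl Y w) :
    (coding B e c m₀ b₀).cl (Sum.inr '' Y) (.inr w) := by
  induction hw with
  | base hy => exact .base (mem_image_of_mem _ hy)
  | op t y _ ih => exact .op (A := coding B e c m₀ b₀) (.inl t) (fun k => .inr (y k)) ih

theorem coding_op_code {r : ℕ} (z : Fin r → M) (w : M) :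
    (coding B e c m₀ b₀).op (.inr ⟨.inl r⟩) (Fin.snoc (fun k => .inl (z k)) (.inl w)) =
      .inr (c r z w) := by
  simp [coding]

theorem coding_op_decode {r : ℕ} (z : Fin r → M) (b : N) :
    (coding B e c m₀ b₀).op (.inr ⟨.inr r⟩) (Fin.snoc (fun k => .inl (z k)) (.inr b)) =
      .inl (e r z b) := by
  simp [coding]

theorem cl_coding_code {X : Set (M ⊕ N)} {r : ℕ} {z : Fin r → M} {w : M}
    (hz : ∀ k, (coding B e c m₀ b₀).cl X (.inl (z k)))
    (hw : (coding B e c m₀ b₀).cl X (.inl w)) :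
    (coding B e c m₀ b₀).cl X (.inr (c r z w)) := by
  rw [← coding_op_code]
  refine .op _ _ (Fin.lastCases ?_ fun k => ?_)
  · exact (Fin.snoc_last (α := fun _ => M ⊕ N) _ _).symm ▸ hw
  · exact (Fin.snoc_castSucc (α := fun _ => M ⊕ N) _ _ _).symm ▸ hz k

theorem cl_coding_decode {X : Set (M ⊕ N)} {r : ℕ} {z : Fin r → M} {b : N}
    (hz : ∀ k, (coding B e c m₀ b₀).cl X (.inl (z k)))
    (hb : (coding B e c m₀ b₀).cl X (.inr b)) :
    (coding B e c m₀ b₀).cl X (.inl (e r z b)) := by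
  rw [← coding_op_decode]
  refine .op _ _ (Fin.lastCases ?_ fun k => ?_)
  · exact (Fin.snoc_last (α := fun _ => M ⊕ N) _ _).symm ▸ hb
  · exact (Fin.snoc_castSucc (α := fun _ => M ⊕ N) _ _ _).symm ▸ hz k

theorem not_isBadSeq_coding_inr (hB : B.Artinian) (w : ℕ → N) :
    ¬ (coding B e c m₀ b₀).IsBadSeq (Sum.inr ∘ w) := fun hw =>
  (show B.IsBadSeq w from fun n hn => hw n (by rw [image_comp]; exact cl_coding_inr hn))
    |>.not_artinian hB

theorem not_isBadSeq_coding_inl {A : Alg ι M} (hA : A.Artinian) (hB : B.Artinian)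
    (hec : ∀ r z, LeftInvOn (e r z) (c r z) {m | A.cl (range z) m}) (x : ℕ → M) :
    ¬ (coding B e c m₀ b₀).IsBadSeq (Sum.inl ∘ x) := by
  intro hx
  set C := coding B e c m₀ b₀
  have hD := (hA.finite_setOf_not_cl x).infinite_compl
  set f := Nat.nth (· ∈ {n | ¬ A.cl (x '' Ioi n) (x n)}ᶜ)
  have hf : StrictMono f := Nat.nth_strictMono hD
  have hdep : ∀ k, A.cl (x '' Ioi (f k)) (x (f k)) := fun k =>
    not_not.1 (Nat.nth_mem_of_infinite hD k)
  choose r z hzx hxz using fun k => (hdep k).exists_fin_tuple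
  set W : ℕ → N := fun k => c (r k) (z k) (x (f k))
  have hz : ∀ k j, k ≤ j → ∀ i, C.cl (Sum.inl '' (x '' Ioi (f k))) (.inl (z j i)) := by
    intro k j hkj i
    obtain ⟨m, hm, hmz⟩ := hzx j (mem_range_self i)
    exact .base ⟨z j i, ⟨m, (hf.monotone hkj).trans_lt hm, hmz⟩, rfl⟩
  have hW : ∀ k j, k < j → C.cl (Sum.inl '' (x '' Ioi (f k))) (.inr (W j)) := fun k j hkj =>
    cl_coding_code (hz k j hkj.le) (.base ⟨x (f j), ⟨f j, hf hkj, rfl⟩, rfl⟩)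
  -- if `W k` were generated by later codes, decoding it would generate `x (f k)` from later terms
  refine (show B.IsBadSeq W from fun k hk => hx (f k) ?_).not_artinian hB
  rw [image_comp, Function.comp_apply, ← hec (r k) (z k) (hxz k)]
  refine cl_coding_decode (hz k k le_rfl) ((cl_coding_inr hk).trans ?_)
  rintro _ ⟨_, ⟨j, hj, rfl⟩, rfl⟩
  exact hW k j hj

theorem coding_artinian {A : Alg ι M} (hA : A.Artinian) (hB : B.Artinian)
    (hec : ∀ r z, LeftInvOn (e r z) (c r z) {m | A.cl (range z) m}) :
    (coding B e c m₀ b₀).Artinian := by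
  by_contra hC
  obtain ⟨u, hu⟩ := exists_isBadSeq_of_not_artinian hC
  have hcover : {n | ∃ m, u n = .inl m} ∪ {n | ∃ b, u n = .inr b} = Set.univ :=
    eq_univ_of_forall fun n => by cases h : u n <;> simp [h]
  rcases infinite_union.1 (hcover ▸ infinite_univ) with hL | hR
  · choose x hx using Nat.nth_mem_of_infinite hL
    have hux : u ∘ Nat.nth _ = Sum.inl ∘ x := funext hx
    exact not_isBadSeq_coding_inl hA hB hec x (hux ▸ hu.comp (Nat.nth_strictMono hL))
  · choose w hw using Nat.nth_mem_of_infinite hR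
    have huw : u ∘ Nat.nth _ = Sum.inr ∘ w := funext hw
    exact not_isBadSeq_coding_inr hB w (huw ▸ hu.comp (Nat.nth_strictMono hR))

end Coding

end Alg

/-- If artin(λ₁) exists (κ₀ is the least cardinal all of whose algebras
with ≤ λ₁ operations are non-Artinian) and λ₁ < λ₂ < κ₀, then artin(λ₂) = κ₀. -/
theorem stmt10 (lam₁ lam₂ κ₀ : Cardinal.{u}) (hlam₁ : ℵ₀ ≤ lam₁)
    (h12 : lam₁ < lam₂) (h2κ : lam₂ < κ₀)
    (hleast : IsLeast {κ | ArtinAt lam₁ κ} κ₀) :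
    IsLeast {κ | ArtinAt lam₂ κ} κ₀ := by
  refine ⟨fun ι M A hι hM hA => ?_, fun κ hκ => hleast.2 (hκ.anti h12.le)⟩
  have hlam₂ : ℵ₀ ≤ lam₂ := hlam₁.trans h12.le
  have hB : ¬ ArtinAt lam₁ lam₂ := fun h => (hleast.2 h).not_gt h2κ
  simp only [ArtinAt, not_forall, not_not] at hB
  obtain ⟨ι', N, B, hι', hN, hB⟩ := hB
  have : Nonempty M := mk_ne_zero_iff.1 (hM ▸ (aleph0_pos.trans_le (hlam₂.trans h2κ.le)).ne')
  have : Nonempty N := mk_ne_zero_iff.1 (hN ▸ (aleph0_pos.trans_le hlam₂).ne')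
  choose e c hec using fun r (z : Fin r → M) => exists_leftInvOn_of_mk_le (N := N)
    (hN ▸ A.mk_setOf_cl_le hlam₂ hι ((finite_range z).lt_aleph0.le.trans hlam₂))
  refine hleast.1 _ _ (B.coding e c (Classical.arbitrary M) (Classical.arbitrary N)) ?_ ?_
    (Alg.coding_artinian hA hB hec)
  · rw [mk_sum, mk_uLift, mk_sum]
    simpa using add_le_of_le hlam₁ hι' hlam₁
  · rw [mk_sum, lift_id, lift_id, hM, hN]
    exact add_eq_left (hlam₂.trans h2κ.le) h2κ.le
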